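/- arXiv:gr-qc/9611017 — 4 statements merged into one kernel-verified Lean document; each statement's English description precedes it below -/
import Mathlib

section
/- Let f : [0,∞) → ℝ be continuous and convex, and suppose there exist nonnegative constants c₁, c₂, c₃ such that |f((1−ε)x) − f(x)| ≤ |ε|(c₁|f(x)| + c₂|x| + c₃) for all x ≥ 0 and all sufficiently small |ε|. Let (q_j)_{j≥1} and (p_j)_{j≥1} be sequences with q_j > 0, p_j ≥ 0, Σ q_j = Σ p_j = 1, and suppose Σ_j q_j |f(p_j/q_j)| < ∞. Let (A_{ij})_{i,j≥1} be a doubly substochastic family with 0 ≤ A_{ij} ≤ 1 and Σ_{i=1}^∞ A_{ij} = 1 for every j. Define q̃_i := lim_{n→∞} Σ_{j=1}^n A_{ij} q_j / b_n (b_n = Σ_{j≤n} q_j) and p̃_i := lim_{n→∞} Σ_{j=1}^n A_{ij} p_j / a_n (a_n = Σ_{j≤n} p_j), assuming these limits exist and q̃_i > 0, Σ q̃_i = 1. Then Σ_{i=1}^∞ q̃_i f(p̃_i/q̃_i) ≤ Σ_{j=1}^∞ q_j f(p_j/q_j). -/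
open scoped BigOperators
open Filter

/-- Existence of a subgradient for a convex function on `[0,∞)` at an interior point. -/
lemma exists_subgrad_aux {f : ℝ → ℝ} (hf : ConvexOn ℝ (Set.Ici 0) f) {x : ℝ} (hx : 0 < x) :
    ∃ k : ℝ, ∀ y, 0 ≤ y → f x + k * (y - x) ≤ f y := by
  set S : Set ℝ := (fun z => (f z - f x) / (z - x)) '' Set.Ioi x with hS
  have hne : S.Nonempty := ⟨_, ⟨x + 1, by simp [hx], rfl⟩⟩
  have hlb : ∀ y, 0 ≤ y → y < x → ∀ m ∈ S, (f x - f y) / (x - y) ≤ m := by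
    rintro y hy hyx m ⟨z, hz, rfl⟩
    exact hf.slope_mono_adjacent hy (le_of_lt (lt_trans hx hz)) hyx hz
  have hbdd : BddBelow S := ⟨(f x - f 0) / (x - 0), fun m hm => hlb 0 le_rfl hx m hm⟩
  refine ⟨sInf S, fun y hy => ?_⟩
  rcases lt_trichotomy y x with h | h | h
  · have h1 : (f x - f y) / (x - y) ≤ sInf S := le_csInf hne (hlb y hy h)
    have h2 : 0 < x - y := by linarith
    rw [div_le_iff₀ h2] at h1
    linarith
  · subst h; simp
  · have h1 : sInf S ≤ (f y - f x) / (y - x) := csInf_le hbdd ⟨y, h, rfl⟩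
    have h2 : 0 < y - x := by linarith
    rw [le_div_iff₀ h2] at h1
    linarith

/-- The core analytic inequality underlying the monotonicity theorem: a
column-stochastic infinite matrix `A` applied simultaneously to a probability
distribution `p` and a positive reference distribution `q` decreases the
f-divergence `Σ q_j f(p_j/q_j)`, for continuous convex `f` satisfying the
stated local regularity condition. -/
theorem f_divergence_decreases_under_column_stochastic_matrix
    (f : ℝ → ℝ)
    (hf_cont : ContinuousOn f (Set.Ici 0))
    (hf_conv : ConvexOn ℝ (Set.Ici 0) f)
    (hf_reg : ∃ c₁ c₂ c₃ : ℝ, 0 ≤ c₁ ∧ 0 ≤ c₂ ∧ 0 ≤ c₃ ∧ ∃ δ > (0:ℝ),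
      ∀ x : ℝ, 0 ≤ x → ∀ ε : ℝ, |ε| ≤ δ →
        |f ((1 - ε) * x) - f x| ≤ |ε| * (c₁ * |f x| + c₂ * |x| + c₃))
    (q p : ℕ → ℝ)
    (hq : ∀ j, 0 < q j) (hp : ∀ j, 0 ≤ p j)
    (hq1 : HasSum q 1) (hp1 : HasSum p 1)
    (hfin : Summable (fun j => q j * |f (p j / q j)|))
    (A : ℕ → ℕ → ℝ)
    (hA : ∀ i j, 0 ≤ A i j ∧ A i j ≤ 1)
    (hcol : ∀ j, HasSum (fun i => A i j) 1)
    (qt pt : ℕ → ℝ)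
    (hqt : ∀ i, Tendsto
      (fun n => (∑ j ∈ Finset.range n, A i j * q j) / (∑ j ∈ Finset.range n, q j))
      atTop (nhds (qt i)))
    (hpt : ∀ i, Tendsto
      (fun n => (∑ j ∈ Finset.range n, A i j * p j) / (∑ j ∈ Finset.range n, p j))
      atTop (nhds (pt i)))
    (hqt_pos : ∀ i, 0 < qt i) (hqt1 : HasSum qt 1) :
    ∑' i, qt i * f (pt i / qt i) ≤ ∑' j, q j * f (p j / q j) := by
  classical
  have hA0 : ∀ i j, 0 ≤ A i j := fun i j => (hA i j).1
  have hA1 : ∀ i j, A i j ≤ 1 := fun i j => (hA i j).2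
  have hqs : Summable q := hq1.summable
  have hps : Summable p := hp1.summable
  -- summability of rows against q and p
  have hAq : ∀ i, Summable (fun j => A i j * q j) := fun i =>
    Summable.of_nonneg_of_le (fun j => mul_nonneg (hA0 i j) (hq j).le)
      (fun j => by nlinarith [hA1 i j, (hq j).le, hA0 i j]) hqs
  have hAp : ∀ i, Summable (fun j => A i j * p j) := fun i =>
    Summable.of_nonneg_of_le (fun j => mul_nonneg (hA0 i j) (hp j))
      (fun j => by nlinarith [hA1 i j, hp j, hA0 i j]) hps
  -- identify qt and pt with the series
  have hqt_eq : ∀ i, qt i = ∑' j, A i j * q j := by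
    intro i
    have hb : Tendsto (fun n => ∑ j ∈ Finset.range n, q j) atTop (nhds 1) :=
      hq1.tendsto_sum_nat
    have hnum : Tendsto (fun n => ∑ j ∈ Finset.range n, A i j * q j) atTop
        (nhds (∑' j, A i j * q j)) := (hAq i).hasSum.tendsto_sum_nat
    have hdiv := hnum.div hb one_ne_zero
    rw [div_one] at hdiv
    exact tendsto_nhds_unique (hqt i) hdiv
  have hpt_eq : ∀ i, pt i = ∑' j, A i j * p j := by
    intro i
    have hb : Tendsto (fun n => ∑ j ∈ Finset.range n, p j) atTop (nhds 1) :=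
      hp1.tendsto_sum_nat
    have hnum : Tendsto (fun n => ∑ j ∈ Finset.range n, A i j * p j) atTop
        (nhds (∑' j, A i j * p j)) := (hAp i).hasSum.tendsto_sum_nat
    have hdiv := hnum.div hb one_ne_zero
    rw [div_one] at hdiv
    exact tendsto_nhds_unique (hpt i) hdiv
  have hpt_nonneg : ∀ i, 0 ≤ pt i := fun i => by
    rw [hpt_eq i]; exact tsum_nonneg fun j => mul_nonneg (hA0 i j) (hp j)
  set g : ℕ → ℝ := fun j => q j * f (p j / q j) with hg
  have habs_g : Summable (fun j => |g j|) := by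
    refine hfin.congr fun j => ?_
    rw [hg, abs_mul, abs_of_pos (hq j)]
  have hgs : Summable g := habs_g.of_abs
  -- product summability for nonnegative sequences
  have key : ∀ (h : ℕ → ℝ), (∀ j, 0 ≤ h j) → Summable h →
      Summable (fun x : ℕ × ℕ => A x.2 x.1 * h x.1) := by
    intro h h0 hs
    rw [summable_prod_of_nonneg (fun x => mul_nonneg (hA0 x.2 x.1) (h0 x.1))]
    refine ⟨fun j => (hcol j).summable.mul_right (h j), ?_⟩
    refine hs.congr fun j => ?_
    show h j = ∑' i, A i j * h j
    rw [tsum_mul_right, (hcol j).tsum_eq, one_mul]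
  have SP : Summable (fun x : ℕ × ℕ => A x.2 x.1 * p x.1) := key p hp hps
  have SQ : Summable (fun x : ℕ × ℕ => A x.2 x.1 * q x.1) := key q (fun j => (hq j).le) hqs
  have SG : Summable (fun x : ℕ × ℕ => A x.2 x.1 * |g x.1|) :=
    key (fun j => |g j|) (fun j => abs_nonneg _) habs_g
  have SF : Summable (fun x : ℕ × ℕ => A x.2 x.1 * g x.1) := by
    apply Summable.of_abs
    refine SG.congr fun x => ?_
    rw [abs_mul (A x.2 x.1) (g x.1), abs_of_nonneg (hA0 x.2 x.1)]
  -- swapped versions (index order (i, j))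
  have SPsw : Summable (fun x : ℕ × ℕ => A x.1 x.2 * p x.2) := SP.prod_symm
  have SGsw : Summable (fun x : ℕ × ℕ => A x.1 x.2 * |g x.2|) := SG.prod_symm
  have SFsw : Summable (fun x : ℕ × ℕ => A x.1 x.2 * g x.2) := SF.prod_symm
  -- Summability of pt
  have hpts : Summable pt := by
    have := ((summable_prod_of_nonneg
      (f := fun x : ℕ × ℕ => A x.1 x.2 * p x.2)
      (fun x => mul_nonneg (hA0 x.1 x.2) (hp x.2))).mp SPsw).2
    exact this.congr fun i => (hpt_eq i).symm
  -- the majorant sequence s and its properties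
  set s : ℕ → ℝ := fun i => ∑' j, A i j * g j with hs_def
  set S : ℕ → ℝ := fun i => ∑' j, A i j * |g j| with hS_def
  have hSsum : Summable S :=
    ((summable_prod_of_nonneg (f := fun x : ℕ × ℕ => A x.1 x.2 * |g x.2|)
      (fun x => mul_nonneg (hA0 x.1 x.2) (abs_nonneg _))).mp SGsw).2
  have hAg : ∀ i, Summable (fun j => A i j * g j) := by
    intro i
    apply Summable.of_abs
    refine Summable.of_nonneg_of_le (fun j => abs_nonneg _) (fun j => ?_) habs_g
    rw [abs_mul (A i j) (g j), abs_of_nonneg (hA0 i j)]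
    nlinarith [hA1 i j, abs_nonneg (g j), hA0 i j]
  have hsabs : ∀ i, |s i| ≤ S i := by
    intro i
    have h1 : Summable fun j => ‖A i j * g j‖ := by
      refine Summable.of_nonneg_of_le (fun j => norm_nonneg _) (fun j => ?_) habs_g
      rw [Real.norm_eq_abs, abs_mul (A i j) (g j), abs_of_nonneg (hA0 i j)]
      nlinarith [hA1 i j, abs_nonneg (g j), hA0 i j]
    have h3 : ∑' j, ‖A i j * g j‖ = S i := by
      refine tsum_congr fun j => ?_
      rw [Real.norm_eq_abs, abs_mul (A i j) (g j), abs_of_nonneg (hA0 i j)]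
    calc |s i| = ‖∑' j, A i j * g j‖ := (Real.norm_eq_abs _).symm
      _ ≤ ∑' j, ‖A i j * g j‖ := norm_tsum_le_tsum_norm h1
      _ = S i := h3
  have hssum : Summable s := by
    apply Summable.of_abs
    exact Summable.of_nonneg_of_le (fun i => abs_nonneg _) hsabs hSsum
  -- total of s equals RHS
  have hstot : ∑' i, s i = ∑' j, g j := by
    have h1 : ∑' i, s i = ∑' (i) (j), A i j * g j := rfl
    have h2 : ∑' (i) (j), A i j * g j = ∑' (j) (i), A i j * g j :=
      Summable.tsum_comm (f := fun j i => A i j * g j) SF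
    rw [h1, h2]
    congr 1
    funext j
    rw [tsum_mul_right, (hcol j).tsum_eq, one_mul]
  -- lower bound via subgradient at 1
  obtain ⟨k₁, hk₁⟩ := exists_subgrad_aux hf_conv one_pos
  set t : ℕ → ℝ := fun i => qt i * f (pt i / qt i) with ht_def
  set l : ℕ → ℝ := fun i => qt i * f 1 + k₁ * (pt i - qt i) with hl_def
  have hlsum : Summable l :=
    (hqt1.summable.mul_right (f 1)).add (((hpts.sub hqt1.summable)).mul_left k₁)
  have hlt : ∀ i, l i ≤ t i := by
    intro i
    have hy : (0:ℝ) ≤ pt i / qt i := div_nonneg (hpt_nonneg i) (hqt_pos i).le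
    have h1 := hk₁ _ hy
    have h2 := mul_le_mul_of_nonneg_left h1 (hqt_pos i).le
    have h3 : pt i / qt i * qt i = pt i := div_mul_cancel₀ _ (hqt_pos i).ne'
    calc l i = qt i * (f 1 + k₁ * (pt i / qt i - 1)) := by
            show qt i * f 1 + k₁ * (pt i - qt i) = _
            linear_combination (-k₁) * h3
      _ ≤ qt i * f (pt i / qt i) := h2
      _ = t i := rfl
  -- upper bound: Jensen via subgradient at pt i / qt i
  have hts : ∀ i, t i ≤ s i := by
    intro i
    rcases eq_or_lt_of_le (hpt_nonneg i) with h0 | hpos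
    · -- pt i = 0
      have hterm : ∀ j, A i j * g j = (A i j * q j) * f 0 := by
        intro j
        rcases eq_or_lt_of_le (hA0 i j) with hz | hz
        · rw [← hz]; ring
        · have hj : A i j * p j = 0 := by
            have hle : A i j * p j ≤ pt i := by
              rw [hpt_eq i]
              exact Summable.le_tsum (hAp i) j fun j' _ => mul_nonneg (hA0 i j') (hp j')
            have := mul_nonneg (hA0 i j) (hp j)
            linarith [h0 ▸ hle]
          have hpj : p j = 0 := by
            rcases mul_eq_zero.mp hj with h | h
            · exact absurd h hz.ne'
            · exact h
          rw [hg]; simp only [hpj, zero_div]; ring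
      have hsi : s i = qt i * f 0 := by
        rw [hs_def]
        simp only [hterm]
        rw [tsum_mul_right, ← hqt_eq i]
      rw [hsi]
      show qt i * f (pt i / qt i) ≤ qt i * f 0
      rw [← h0, zero_div]
    · -- pt i > 0
      set x : ℝ := pt i / qt i with hx_def
      have hxpos : 0 < x := div_pos hpos (hqt_pos i)
      obtain ⟨k, hk⟩ := exists_subgrad_aux hf_conv hxpos
      have hj : ∀ j, (f x - k * x) * (A i j * q j) + k * (A i j * p j) ≤ A i j * g j := by
        intro j
        have hy : (0:ℝ) ≤ p j / q j := div_nonneg (hp j) (hq j).le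
        have h1 := hk _ hy
        have h2 := mul_le_mul_of_nonneg_left h1 (mul_nonneg (hA0 i j) (hq j).le)
        have hpq : p j / q j * q j = p j := div_mul_cancel₀ _ (hq j).ne'
        have hL : (A i j * q j) * (f x + k * (p j / q j - x))
            = (f x - k * x) * (A i j * q j) + k * (A i j * p j) := by
          linear_combination (A i j * k) * hpq
        have hR : (A i j * q j) * f (p j / q j) = A i j * g j := by
          show _ = A i j * (q j * f (p j / q j)); ring
        rw [hL, hR] at h2
        exact h2
      have hLs : Summable (fun j => (f x - k * x) * (A i j * q j) + k * (A i j * p j)) :=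
        ((hAq i).mul_left _).add ((hAp i).mul_left k)
      have h3 := Summable.tsum_le_tsum hj hLs (hAg i)
      have h4 : ∑' j, ((f x - k * x) * (A i j * q j) + k * (A i j * p j))
          = (f x - k * x) * qt i + k * pt i := by
        rw [Summable.tsum_add ((hAq i).mul_left _) ((hAp i).mul_left k),
          tsum_mul_left, tsum_mul_left, ← hqt_eq i, ← hpt_eq i]
      have h5 : x * qt i = pt i := div_mul_cancel₀ _ (hqt_pos i).ne'
      have h6 : (f x - k * x) * qt i + k * pt i = t i := by
        show _ = qt i * f x
        linear_combination (-k) * h5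
      rw [h4, h6] at h3
      exact h3
  -- summability of t
  have htabs : ∀ i, |t i| ≤ |l i| + |s i| := by
    intro i
    rw [abs_le]
    constructor
    · have := hlt i; have := neg_abs_le (l i); have := abs_nonneg (s i); linarith
    · have := hts i; have := le_abs_self (s i); have := abs_nonneg (l i); linarith
  have htsum : Summable t := by
    apply Summable.of_abs
    exact Summable.of_nonneg_of_le (fun i => abs_nonneg _) htabs (hlsum.abs.add hssum.abs)
  calc ∑' i, t i ≤ ∑' i, s i := Summable.tsum_le_tsum hts htsum hssum
    _ = ∑' j, g j := hstot
end

section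
/- Let T : P(F) → P(F̃) be a convex-linear map between density matrices on separable Hilbert spaces. Suppose f : [0,∞) → ℝ is continuous, convex, and satisfies: there exist c₁, c₂, c₃ ≥ 0 with |f((1−ε)x) − f(x)| ≤ |ε|(c₁|f(x)| + c₂|x| + c₃) for all x ≥ 0 and sufficiently small |ε|. Suppose there exist positive-definite density matrices ρ_∞ ∈ P(F) and ρ̃_∞ ∈ P(F̃) with T(ρ_∞) = ρ̃_∞. Let ρ₀ ∈ P(F) satisfy [ρ_∞, ρ₀] = 0, [ρ̃_∞, T(ρ₀)] = 0, and Tr[ρ_∞ |f(ρ₀ ρ_∞^{−1})|] < ∞. Then −Tr[ρ̃_∞ f(T(ρ₀) ρ̃_∞^{−1})] ≥ −Tr[ρ_∞ f(ρ₀ ρ_∞^{−1})]. -/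
/-!
Let `Aⱼᵢ := Re ⟪ĩⱼ, T(|i⟩⟨i|) ĩⱼ⟫`. As `T` maps density matrices to density matrices, `A` is
column-stochastic. Convex-linearity only controls `T` on finite convex combinations, but writing a
diagonal `ρ = Σ rᵢ |i⟩⟨i|` as its first `n` terms plus `1 - Σ_{i<n} rᵢ` times a density matrix
bounds the error of the partial sums `Σ_{i<n} Aⱼᵢ rᵢ` by the tail mass, so the `j`-th diagonal
entry of `T ρ` is `Σᵢ Aⱼᵢ rᵢ`. Hence `q̃ = A q` and `p̃ = A p`, and the inequality is the
monotonicity of the `f`-divergence `Σ qᵢ f(pᵢ/qᵢ)` under the Markov map `A`: Jensen's inequality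
with weights `Aⱼᵢ qᵢ / q̃ⱼ` gives `q̃ⱼ f(p̃ⱼ/q̃ⱼ) ≤ Σᵢ Aⱼᵢ qᵢ f(pᵢ/qᵢ)`, and summing over `j`
(an absolutely convergent double series) gives the result.
-/

open scoped BigOperators

local notation "⟪" x ", " y "⟫" => @inner ℂ _ _ x y

def IsDensityMatrix {F : Type*} [NormedAddCommGroup F] [InnerProductSpace ℂ F]
    [CompleteSpace F] (b : HilbertBasis ℕ ℂ F) (ρ : F →L[ℂ] F) : Prop :=
  ρ.IsPositive ∧ HasSum (fun i => ⟪b i, ρ (b i)⟫) 1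

open Set Filter Topology Finset InnerProductSpace

namespace ConvexOn

variable {S : Set ℝ} {f : ℝ → ℝ}

lemma add_rightDeriv_mul_sub_le (hf : ConvexOn ℝ S f) {m y : ℝ} (hm : m ∈ interior S)
    (hy : y ∈ S) : f m + derivWithin f (Ioi m) m * (y - m) ≤ f y := by
  rcases lt_trichotomy y m with hym | rfl | hmy
  · have h := (hf.slope_le_leftDeriv_of_mem_interior hy hm hym).trans
      (hf.leftDeriv_le_rightDeriv_of_mem_interior hm)
    rw [slope_def_field, div_le_iff₀ (sub_pos.2 hym)] at h
    linarith
  · simp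
  · have h := hf.rightDeriv_le_slope_of_mem_interior hm hy hmy
    rw [slope_def_field, le_div_iff₀ (sub_pos.2 hmy)] at h
    linarith

lemma exists_affine_le (hf : ConvexOn ℝ (Ici 0) f) :
    ∃ α β : ℝ, ∀ x, 0 ≤ x → α + β * x ≤ f x := by
  have h1 : (1 : ℝ) ∈ interior (Ici 0) := by rw [interior_Ici]; exact mem_Ioi.2 one_pos
  refine ⟨f 1 - derivWithin f (Ioi 1) 1, derivWithin f (Ioi 1) 1, fun x hx => ?_⟩
  linarith [hf.add_rightDeriv_mul_sub_le h1 (mem_Ici.2 hx)]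

lemma mul_map_div_le_tsum {ι : Type*} (hf : ConvexOn ℝ (Ici 0) f) {a x : ι → ℝ} {Q P : ℝ}
    (ha : ∀ i, 0 ≤ a i) (hx : ∀ i, 0 ≤ x i) (hQ : 0 < Q) (haQ : HasSum a Q)
    (hP : HasSum (fun i => a i * x i) P) (hsum : Summable fun i => a i * f (x i)) :
    Q * f (P / Q) ≤ ∑' i, a i * f (x i) := by
  have hax : ∀ i, 0 ≤ a i * x i := fun i => mul_nonneg (ha i) (hx i)
  rcases (hP.nonneg hax).eq_or_lt with rfl | hP0
  · have hzero : ∀ i, a i * f (x i) = a i * f 0 := fun i => by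
      rcases mul_eq_zero.1 (congrFun ((hasSum_zero_iff_of_nonneg hax).1 hP) i) with h | h <;>
        simp [h]
    rw [zero_div, tsum_congr hzero, (haQ.mul_right (f 0)).tsum_eq]
  · have hm : P / Q ∈ interior (Ici (0 : ℝ)) := by rw [interior_Ici]; exact div_pos hP0 hQ
    set k := derivWithin f (Ioi (P / Q)) (P / Q)
    have hPQ : Q * (P / Q) = P := mul_div_cancel₀ P hQ.ne'
    have hsupport : HasSum (fun i => a i * (f (P / Q) + k * (x i - P / Q))) (Q * f (P / Q)) := by
      have h := (haQ.mul_right (f (P / Q) - k * (P / Q))).add (hP.mul_left k)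
      rw [show Q * (f (P / Q) - k * (P / Q)) + k * P = Q * f (P / Q) by
        linear_combination (-k) * hPQ] at h
      exact h.congr_fun fun i => by ring
    exact hasSum_le (fun i => mul_le_mul_of_nonneg_left
      (hf.add_rightDeriv_mul_sub_le hm (hx i)) (ha i)) hsupport hsum.hasSum

end ConvexOn

structure IsColumnStochastic {κ ι : Type*} (A : κ → ι → ℝ) : Prop where
  nonneg : ∀ j i, 0 ≤ A j i
  hasSum_one : ∀ i, HasSum (fun j => A j i) 1

namespace IsColumnStochastic

variable {κ ι : Type*} {A : κ → ι → ℝ} {u : ι → ℝ}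

lemma summable_uncurry (hA : IsColumnStochastic A) (hu : Summable u) :
    Summable fun z : κ × ι => A z.1 z.2 * u z.2 := by
  have habs : ∀ j i, |A j i * u i| = A j i * |u i| := fun j i => by
    rw [abs_mul, abs_of_nonneg (hA.nonneg j i)]
  have hrow : ∀ i, HasSum (fun j => A j i * |u i|) |u i| := fun i => by
    simpa using (hA.hasSum_one i).mul_right |u i|
  have h : Summable fun z : ι × κ => A z.2 z.1 * |u z.1| :=
    (summable_prod_of_nonneg fun z => mul_nonneg (hA.nonneg _ _) (abs_nonneg _)).2
      ⟨fun i => (hrow i).summable, by simpa only [fun i => (hrow i).tsum_eq] using hu.abs⟩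
  exact summable_abs_iff.1 (by simpa only [habs, Prod.fst_swap, Prod.snd_swap] using h.prod_symm)

lemma summable_mul (hA : IsColumnStochastic A) (hu : Summable u) (j : κ) :
    Summable fun i => A j i * u i :=
  (hA.summable_uncurry hu).prod_factor j

lemma hasSum_tsum_mul (hA : IsColumnStochastic A) (hu : Summable u) :
    HasSum (fun j => ∑' i, A j i * u i) (∑' i, u i) := by
  have hprod := hA.summable_uncurry hu
  have hcol : ∑' i, ∑' j, A j i * u i = ∑' i, u i :=
    tsum_congr fun i => by simpa using ((hA.hasSum_one i).mul_right (u i)).tsum_eq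
  have h := hprod.hasSum.prod_fiberwise fun j => (hA.summable_mul hu j).hasSum
  rwa [hprod.tsum_prod, ← hprod.tsum_comm, hcol] at h

variable {f : ℝ → ℝ}

theorem tsum_mul_map_div_le (hA : IsColumnStochastic A) (hf : ConvexOn ℝ (Ici 0) f)
    {p q : ι → ℝ} {p' q' : κ → ℝ} (hp : ∀ i, 0 ≤ p i) (hq : ∀ i, 0 < q i) (hq' : ∀ j, 0 < q' j)
    (hp_sum : Summable p) (hq_sum : Summable q)
    (hAp : ∀ j, HasSum (fun i => A j i * p i) (p' j))
    (hAq : ∀ j, HasSum (fun i => A j i * q i) (q' j))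
    (hfin : Summable fun i => q i * f (p i / q i)) :
    ∑' j, q' j * f (p' j / q' j) ≤ ∑' i, q i * f (p i / q i) := by
  have hjensen : ∀ j, q' j * f (p' j / q' j) ≤ ∑' i, A j i * (q i * f (p i / q i)) := by
    intro j
    have hpq : ∀ i, A j i * q i * (p i / q i) = A j i * p i := fun i => by
      rw [mul_assoc, mul_div_cancel₀ _ (hq i).ne']
    simpa only [mul_assoc] using hf.mul_map_div_le_tsum
      (fun i => mul_nonneg (hA.nonneg j i) (hq i).le) (fun i => div_nonneg (hp i) (hq i).le)
      (hq' j) (hAq j) (by simpa only [hpq] using hAp j)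
      (by simpa only [mul_assoc] using hA.summable_mul hfin j)
  have hH := hA.hasSum_tsum_mul hfin
  obtain ⟨α, β, hαβ⟩ := hf.exists_affine_le
  have hlow : ∀ j, α * q' j + β * p' j ≤ q' j * f (p' j / q' j) := fun j => by
    have hp' : 0 ≤ p' j := (hAp j).nonneg fun i => mul_nonneg (hA.nonneg j i) (hp i)
    have h := mul_le_mul_of_nonneg_left (hαβ _ (div_nonneg hp' (hq' j).le)) (hq' j).le
    rwa [mul_add, mul_left_comm, mul_div_cancel₀ _ (hq' j).ne', mul_comm (q' j) α] at h
  have hL : Summable fun j => α * q' j + β * p' j := by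
    have hq'_sum : Summable q' := by
      simpa only [fun j => (hAq j).tsum_eq] using (hA.hasSum_tsum_mul hq_sum).summable
    have hp'_sum : Summable p' := by
      simpa only [fun j => (hAp j).tsum_eq] using (hA.hasSum_tsum_mul hp_sum).summable
    exact (hq'_sum.mul_left α).add (hp'_sum.mul_left β)
  -- `tsum` is `0` off summable families, so the left side must be shown summable: it lies
  -- between an affine minorant and the Jensen bound.
  have hG : Summable fun j => q' j * f (p' j / q' j) := by
    simpa using (Summable.of_nonneg_of_le (fun j => sub_nonneg.2 (hlow j))
      (fun j => sub_le_sub_right (hjensen j) _) (hH.summable.sub hL)).add hL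
  exact (hG.tsum_le_tsum hjensen hH.summable).trans_eq hH.tsum_eq

end IsColumnStochastic

namespace HilbertBasis

variable {ι F G : Type*} [NormedAddCommGroup F] [InnerProductSpace ℂ F]
  [NormedAddCommGroup G] [InnerProductSpace ℂ G] (b : HilbertBasis ι ℂ F)

lemma continuousLinearMap_ext {S T : F →L[ℂ] G} (h : ∀ i, S (b i) = T (b i)) : S = T :=
  ContinuousLinearMap.ext_on (Submodule.dense_iff_topologicalClosure_eq_top.2 b.dense_span)
    (by rintro _ ⟨i, rfl⟩; exact h i)

lemma sum_smul_rankOne_self_apply [DecidableEq ι] (s : Finset ι) (r : ι → ℝ) (m : ι) :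
    (∑ i ∈ s, r i • rankOne ℂ (b i) (b i)) (b m) = ((if m ∈ s then r m else 0 : ℝ) : ℂ) • b m := by
  have h : ∀ i, (r i • rankOne ℂ (b i) (b i)) (b m) = if i = m then (r i : ℂ) • b m else 0 := by
    intro i
    rcases eq_or_ne i m with rfl | him
    · simp [← Complex.coe_smul, b.orthonormal.1 i]
    · simp [b.orthonormal.inner_eq_zero him, him]
  simp only [_root_.sum_apply, h, Finset.sum_ite_eq']
  split_ifs <;> simp

variable {b} {D : F →L[ℂ] F} {d : ι → ℝ}

lemma inner_apply_of_diag (hD : ∀ i, D (b i) = (d i : ℂ) • b i) (i : ι) (x : F) :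
    ⟪b i, D x⟫ = d i * ⟪b i, x⟫ := by
  have h : innerSL ℂ (b i) ∘L D = (d i : ℂ) • innerSL ℂ (b i) :=
    b.continuousLinearMap_ext fun m => by
      rcases eq_or_ne i m with rfl | him
      · simp [hD]
      · simp [hD, b.orthonormal.inner_eq_zero him]
  simpa using DFunLike.congr_fun h x

lemma inner_apply_self_of_diag (hD : ∀ i, D (b i) = (d i : ℂ) • b i) (i : ι) :
    ⟪b i, D (b i)⟫ = d i := by
  simp [inner_apply_of_diag hD, b.orthonormal.1 i]

lemma hasSum_inner_apply_of_diag (hD : ∀ i, D (b i) = (d i : ℂ) • b i) (x y : F) :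
    HasSum (fun i => (d i : ℂ) * (⟪x, b i⟫ * ⟪b i, y⟫)) ⟪x, D y⟫ := by
  simpa only [inner_apply_of_diag hD, mul_left_comm] using b.hasSum_inner_mul_inner x (D y)

lemma isPositive_of_diag (hd : ∀ i, 0 ≤ d i) (hD : ∀ i, D (b i) = (d i : ℂ) • b i) :
    D.IsPositive := by
  have hsymm : D.IsSymmetric := fun x y => by
    have h := (hasSum_inner_apply_of_diag hD y x).star
    simp only [star_mul', RCLike.star_def, Complex.conj_ofReal, inner_conj_symm] at h
    exact h.unique ((hasSum_inner_apply_of_diag hD x y).congr_fun fun i => by ring)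
  refine ⟨hsymm, fun x => ?_⟩
  have h := Complex.hasSum_re (hasSum_inner_apply_of_diag hD x x)
  rw [ContinuousLinearMap.reApplyInnerSelf, show ⟪D x, x⟫ = ⟪x, D x⟫ from hsymm x x]
  refine h.nonneg fun i => ?_
  rw [← inner_conj_symm, Complex.conj_mul']
  norm_cast
  exact mul_nonneg (hd i) (sq_nonneg _)

end HilbertBasis

section DensityMatrix

variable {F : Type*} [NormedAddCommGroup F] [InnerProductSpace ℂ F] [CompleteSpace F]
  {b : HilbertBasis ℕ ℂ F} {ρ : F →L[ℂ] F} {d : ℕ → ℝ}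

lemma isDensityMatrix_of_diag (hd : ∀ i, 0 ≤ d i) (hsum : HasSum d 1)
    (hD : ∀ i, ρ (b i) = (d i : ℂ) • b i) : IsDensityMatrix b ρ := by
  refine ⟨HilbertBasis.isPositive_of_diag hd hD, ?_⟩
  simpa [HilbertBasis.inner_apply_self_of_diag hD] using Complex.hasSum_ofReal.2 hsum

lemma isDensityMatrix_rankOne (i : ℕ) : IsDensityMatrix b (rankOne ℂ (b i) (b i)) := by
  refine isDensityMatrix_of_diag (d := fun m => if m = i then 1 else 0) (fun m => by positivity)
    (hasSum_ite_eq i 1) fun m => ?_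
  simpa using b.sum_smul_rankOne_self_apply {i} 1 m

lemma convex_isDensityMatrix (b : HilbertBasis ℕ ℂ F) :
    Convex ℝ {ρ : F →L[ℂ] F | IsDensityMatrix b ρ} := by
  rintro ρ₁ ⟨hpos₁, hsum₁⟩ ρ₂ ⟨hpos₂, hsum₂⟩ a c ha hc hac
  refine ⟨?_, ?_⟩
  · rw [← Complex.coe_smul, ← Complex.coe_smul]
    exact (hpos₁.smul_of_nonneg (by exact_mod_cast ha)).add
      (hpos₂.smul_of_nonneg (by exact_mod_cast hc))
  · simpa [inner_add_right, ← Complex.coe_smul, inner_smul_right, ← Complex.ofReal_add, hac]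
      using (hsum₁.mul_left (a : ℂ)).add (hsum₂.mul_left (c : ℂ))

namespace IsDensityMatrix

lemma re_inner_nonneg (hρ : IsDensityMatrix b ρ) (i : ℕ) : 0 ≤ (⟪b i, ρ (b i)⟫).re :=
  hρ.1.re_inner_nonneg_right (b i)

lemma hasSum_re_inner (hρ : IsDensityMatrix b ρ) : HasSum (fun i => (⟪b i, ρ (b i)⟫).re) 1 := by
  simpa using Complex.hasSum_re hρ.2

lemma re_inner_le_one (hρ : IsDensityMatrix b ρ) (i : ℕ) : (⟪b i, ρ (b i)⟫).re ≤ 1 :=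
  le_hasSum hρ.hasSum_re_inner i fun j _ => hρ.re_inner_nonneg j

lemma eigenvalue_nonneg (hρ : IsDensityMatrix b ρ) (hD : ∀ i, ρ (b i) = (d i : ℂ) • b i)
    (i : ℕ) : 0 ≤ d i := by
  simpa [HilbertBasis.inner_apply_self_of_diag hD] using hρ.re_inner_nonneg i

lemma hasSum_eigenvalues (hρ : IsDensityMatrix b ρ) (hD : ∀ i, ρ (b i) = (d i : ℂ) • b i) :
    HasSum d 1 := by
  simpa [HilbertBasis.inner_apply_self_of_diag hD] using hρ.hasSum_re_inner

lemma exists_tail (hρ : IsDensityMatrix b ρ) (hD : ∀ i, ρ (b i) = (d i : ℂ) • b i) (n : ℕ) :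
    ∃ τ, IsDensityMatrix b τ ∧
      ρ = ∑ i ∈ range n, d i • rankOne ℂ (b i) (b i) + (1 - ∑ i ∈ range n, d i) • τ := by
  set c := 1 - ∑ i ∈ range n, d i
  set R := ρ - ∑ i ∈ range n, d i • rankOne ℂ (b i) (b i)
  set t : ℕ → ℝ := fun m => if m ∈ range n then 0 else d m
  have hR : ∀ m, R (b m) = (t m : ℂ) • b m := fun m => by
    simp only [R, t, sub_apply, hD, HilbertBasis.sum_smul_rankOne_self_apply, ← sub_smul]
    split_ifs <;> simp
  have ht0 : ∀ m, 0 ≤ t m := fun m => by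
    simp only [t]; split_ifs; exacts [le_rfl, hρ.eigenvalue_nonneg hD m]
  have hr := hρ.hasSum_eigenvalues hD
  have hhead : HasSum (fun m => if m ∈ range n then d m else 0) (∑ i ∈ range n, d i) := by
    have h := hasSum_sum_of_ne_finset_zero (s := range n)
      (f := fun m => if m ∈ range n then d m else 0) (L := .unconditional ℕ) fun m hm => if_neg hm
    rwa [Finset.sum_ite_mem, Finset.inter_self] at h
  have ht : HasSum t c := (hr.sub hhead).congr_fun fun m => by
    simp only [t]; split_ifs <;> simp
  rcases eq_or_ne c 0 with hc | hc
  · have hR0 : R = 0 := b.continuousLinearMap_ext fun m => by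
      simp [hR, congrFun ((hasSum_zero_iff_of_nonneg ht0).1 (hc ▸ ht)) m]
    exact ⟨ρ, hρ, by rw [hc, zero_smul, add_zero, ← sub_eq_zero, ← hR0]⟩
  · refine ⟨c⁻¹ • R, isDensityMatrix_of_diag (d := fun m => c⁻¹ * t m)
      (fun m => mul_nonneg ?_ (ht0 m)) ?_ fun m => ?_, ?_⟩
    · exact inv_nonneg.2 (sub_nonneg.2 (sum_le_hasSum _ (fun i _ => hρ.eigenvalue_nonneg hD i) hr))
    · simpa [inv_mul_cancel₀ hc] using ht.mul_left c⁻¹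
    · simp [hR, ← Complex.coe_smul, smul_smul]
    · rw [smul_inv_smul₀ hc, add_sub_cancel]

end IsDensityMatrix

end DensityMatrix


lemma Convex.map_sum_eq_of_affine {E κ : Type*} [AddCommGroup E] [Module ℝ E] {K : Set E}
    (hK : Convex ℝ K) {φ : E → ℝ}
    (hφ : ∀ x ∈ K, ∀ y ∈ K, ∀ a : ℝ, 0 ≤ a → a ≤ 1 →
      φ (a • x + (1 - a) • y) = a * φ x + (1 - a) * φ y)
    {t : Finset κ} {w : κ → ℝ} {p : κ → E} (hw₀ : ∀ i ∈ t, 0 ≤ w i) (hw₁ : ∑ i ∈ t, w i = 1)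
    (hp : ∀ i ∈ t, p i ∈ K) :
    φ (∑ i ∈ t, w i • p i) = ∑ i ∈ t, w i * φ (p i) := by
  have hcomb : ∀ x ∈ K, ∀ y ∈ K, ∀ a c : ℝ, 0 ≤ a → 0 ≤ c → a + c = 1 →
      φ (a • x + c • y) = a • φ x + c • φ y := by
    intro x hx y hy a c ha hc hac
    obtain rfl : c = 1 - a := by linarith
    exact hφ x hx y hy a ha (by linarith)
  have hconv : ConvexOn ℝ K φ :=
    ⟨hK, fun x hx y hy a c ha hc hac => (hcomb x hx y hy a c ha hc hac).le⟩
  have hconc : ConcaveOn ℝ K φ :=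
    ⟨hK, fun x hx y hy a c ha hc hac => (hcomb x hx y hy a c ha hc hac).ge⟩
  simpa only [smul_eq_mul] using
    le_antisymm (hconv.map_sum_le hw₀ hw₁ hp) (hconc.le_map_sum hw₀ hw₁ hp)

section Channel

variable {F F' : Type*} [NormedAddCommGroup F] [InnerProductSpace ℂ F] [CompleteSpace F]
  [NormedAddCommGroup F'] [InnerProductSpace ℂ F']
  {bF : HilbertBasis ℕ ℂ F} {bF' : HilbertBasis ℕ ℂ F'} {T : (F →L[ℂ] F) → (F' →L[ℂ] F')}

lemma re_inner_map_sum_add_smul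
    (hlin : ∀ a : ℝ, 0 ≤ a → a ≤ 1 → ∀ ρ₁ ρ₂ : F →L[ℂ] F,
      IsDensityMatrix bF ρ₁ → IsDensityMatrix bF ρ₂ →
      T (a • ρ₁ + (1 - a) • ρ₂) = a • T ρ₁ + (1 - a) • T ρ₂)
    (y : F') {s : Finset ℕ} {w : ℕ → ℝ} {σ : ℕ → F →L[ℂ] F} {τ : F →L[ℂ] F}
    (hw : ∀ i ∈ s, 0 ≤ w i) (hw₁ : ∑ i ∈ s, w i ≤ 1) (hσ : ∀ i ∈ s, IsDensityMatrix bF (σ i))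
    (hτ : IsDensityMatrix bF τ) :
    (⟪y, T (∑ i ∈ s, w i • σ i + (1 - ∑ i ∈ s, w i) • τ) y⟫).re
      = ∑ i ∈ s, w i * (⟪y, T (σ i) y⟫).re + (1 - ∑ i ∈ s, w i) * (⟪y, T τ y⟫).re := by
  have h := (convex_isDensityMatrix bF).map_sum_eq_of_affine
    (φ := fun ρ => (⟪y, T ρ y⟫).re) (fun ρ₁ h₁ ρ₂ h₂ a ha ha₁ => by
      rw [hlin a ha ha₁ ρ₁ ρ₂ h₁ h₂]
      simp [← Complex.coe_smul])
    (t := insertNone s) (w := fun o => o.elim (1 - ∑ i ∈ s, w i) w) (p := fun o => o.elim τ σ)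
    (forall_mem_insertNone.2 ⟨sub_nonneg.2 hw₁, hw⟩) (by simp [sum_insertNone])
    (forall_mem_insertNone.2 ⟨hτ, hσ⟩)
  simpa [sum_insertNone, add_comm] using h

variable [CompleteSpace F']

variable (bF bF' T) in
noncomputable def transitionMatrix (j i : ℕ) : ℝ :=
  (⟪bF' j, T (rankOne ℂ (bF i) (bF i)) (bF' j)⟫).re

lemma isColumnStochastic_transitionMatrix
    (hmap : ∀ ρ, IsDensityMatrix bF ρ → IsDensityMatrix bF' (T ρ)) :
    IsColumnStochastic (transitionMatrix bF bF' T) where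
  nonneg j i := (hmap _ (isDensityMatrix_rankOne i)).re_inner_nonneg j
  hasSum_one i := (hmap _ (isDensityMatrix_rankOne i)).hasSum_re_inner

theorem hasSum_transitionMatrix_mul
    (hmap : ∀ ρ, IsDensityMatrix bF ρ → IsDensityMatrix bF' (T ρ))
    (hlin : ∀ a : ℝ, 0 ≤ a → a ≤ 1 → ∀ ρ₁ ρ₂ : F →L[ℂ] F,
      IsDensityMatrix bF ρ₁ → IsDensityMatrix bF ρ₂ →
      T (a • ρ₁ + (1 - a) • ρ₂) = a • T ρ₁ + (1 - a) • T ρ₂)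
    {ρ : F →L[ℂ] F} {r : ℕ → ℝ} (hρ : IsDensityMatrix bF ρ)
    (hD : ∀ i, ρ (bF i) = (r i : ℂ) • bF i) (j : ℕ) :
    HasSum (fun i => transitionMatrix bF bF' T j i * r i) (⟪bF' j, T ρ (bF' j)⟫).re := by
  set A := transitionMatrix bF bF' T
  have hA := isColumnStochastic_transitionMatrix hmap
  have hr := hρ.hasSum_eigenvalues hD
  have hr0 := hρ.eigenvalue_nonneg hD
  have hA1 : ∀ i, A j i ≤ 1 := fun i => (hmap _ (isDensityMatrix_rankOne i)).re_inner_le_one j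
  have hsum : Summable fun i => A j i * r i :=
    .of_nonneg_of_le (fun i => mul_nonneg (hA.nonneg j i) (hr0 i))
      (fun i => mul_le_of_le_one_left (hr0 i) (hA1 i)) hr.summable
  have hclose : ∀ n, ‖∑ i ∈ range n, A j i * r i - (⟪bF' j, T ρ (bF' j)⟫).re‖
      ≤ 1 - ∑ i ∈ range n, r i := by
    intro n
    obtain ⟨τ, hτ, hρτ⟩ := hρ.exists_tail hD n
    have hc : 0 ≤ 1 - ∑ i ∈ range n, r i := sub_nonneg.2 (sum_le_hasSum _ (fun i _ => hr0 i) hr)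
    have hTτ := hmap τ hτ
    have h₀ := mul_nonneg hc (hTτ.re_inner_nonneg j)
    have h₁ := mul_le_of_le_one_right hc (hTτ.re_inner_le_one j)
    rw [hρτ, re_inner_map_sum_add_smul hlin _ (fun i _ => hr0 i) (by linarith)
      (fun i _ => isDensityMatrix_rankOne i) hτ, Real.norm_eq_abs, abs_le]
    simp only [A, transitionMatrix, mul_comm (r _)]
    constructor <;> linarith
  refine hsum.hasSum_iff_tendsto_nat.2 (tendsto_sub_nhds_zero_iff.1 (squeeze_zero_norm hclose ?_))
  simpa using (tendsto_const_nhds (x := (1 : ℝ))).sub hr.tendsto_sum_nat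

end Channel

theorem nondecreasing_functional_general
    {F F' : Type*} [NormedAddCommGroup F] [InnerProductSpace ℂ F] [CompleteSpace F]
    [NormedAddCommGroup F'] [InnerProductSpace ℂ F'] [CompleteSpace F']
    (bF : HilbertBasis ℕ ℂ F) (bF' : HilbertBasis ℕ ℂ F')
    (T : (F →L[ℂ] F) → (F' →L[ℂ] F'))
    (hmap : ∀ ρ, IsDensityMatrix bF ρ → IsDensityMatrix bF' (T ρ))
    (hlin : ∀ a : ℝ, 0 ≤ a → a ≤ 1 → ∀ ρ₁ ρ₂ : F →L[ℂ] F,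
      IsDensityMatrix bF ρ₁ → IsDensityMatrix bF ρ₂ →
      T (a • ρ₁ + (1 - a) • ρ₂) = a • T ρ₁ + (1 - a) • T ρ₂)
    (f : ℝ → ℝ)
    (hf_conv : ConvexOn ℝ (Set.Ici 0) f)
    -- the positive-definite fixed point: `ρ∞`, `ρ̃∞`, diagonal with `q, q̃ > 0`
    (ρinf : F →L[ℂ] F) (ρtinf : F' →L[ℂ] F')
    (hρinf : IsDensityMatrix bF ρinf)
    (q : ℕ → ℝ) (hq : ∀ i, 0 < q i) (hρinf_diag : ∀ i, ρinf (bF i) = (q i : ℂ) • bF i)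
    (qt : ℕ → ℝ) (hqt : ∀ i, 0 < qt i)
    (hρtinf_diag : ∀ i, ρtinf (bF' i) = (qt i : ℂ) • bF' i)
    (hfix : T ρinf = ρtinf)
    -- `ρ₀` commutes with `ρ∞` and `T ρ₀` with `ρ̃∞`: common eigenbases
    (ρ₀ : F →L[ℂ] F) (hρ₀ : IsDensityMatrix bF ρ₀)
    (p : ℕ → ℝ) (hρ₀_diag : ∀ i, ρ₀ (bF i) = (p i : ℂ) • bF i)
    (pt : ℕ → ℝ) (hTρ₀_diag : ∀ i, T ρ₀ (bF' i) = (pt i : ℂ) • bF' i)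
    -- absolute convergence of `Tr[ρ∞ |f(ρ₀ ρ∞⁻¹)|]`
    (hfin : Summable (fun i => q i * |f (p i / q i)|)) :
    -(∑' i, qt i * f (pt i / qt i)) ≥ -(∑' i, q i * f (p i / q i)) := by
  have hAq : ∀ j, HasSum (fun i => transitionMatrix bF bF' T j i * q i) (qt j) := fun j => by
    simpa [hfix, HilbertBasis.inner_apply_self_of_diag hρtinf_diag] using
      hasSum_transitionMatrix_mul hmap hlin hρinf hρinf_diag j
  have hAp : ∀ j, HasSum (fun i => transitionMatrix bF bF' T j i * p i) (pt j) := fun j => by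
    simpa [HilbertBasis.inner_apply_self_of_diag hTρ₀_diag] using
      hasSum_transitionMatrix_mul hmap hlin hρ₀ hρ₀_diag j
  have hfin' : Summable fun i => q i * f (p i / q i) :=
    summable_abs_iff.1 (by simpa only [abs_mul, abs_of_pos (hq _)] using hfin)
  exact neg_le_neg ((isColumnStochastic_transitionMatrix hmap).tsum_mul_map_div_le hf_conv
    (hρ₀.eigenvalue_nonneg hρ₀_diag) hq hqt (hρ₀.hasSum_eigenvalues hρ₀_diag).summable
    (hρinf.hasSum_eigenvalues hρinf_diag).summable hAp hAq hfin')

/-- Theorem 2 of the paper (generalizing Sorkin): for a convex-linear map `T` of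
density matrices with a positive-definite fixed point `T ρ∞ = ρ̃∞`, and any `ρ₀`
commuting with `ρ∞` (with `T ρ₀` commuting with `ρ̃∞`), diagonalized in common
orthonormal eigenbases as `ρ₀ = Σ p_i|i⟩⟨i|`, `ρ∞ = Σ q_i|i⟩⟨i|`,
`T ρ₀ = Σ p̃_i|ĩ⟩⟨ĩ|`, `ρ̃∞ = Σ q̃_i|ĩ⟩⟨ĩ|`, and such that
`Tr[ρ∞ |f(ρ₀ ρ∞⁻¹)|] = Σ q_i |f(p_i/q_i)| < ∞`, one has
`-Tr[ρ̃∞ f(T(ρ₀) ρ̃∞⁻¹)] ≥ -Tr[ρ∞ f(ρ₀ ρ∞⁻¹)]`. -/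
theorem nondecreasing_functional
    {F F' : Type*} [NormedAddCommGroup F] [InnerProductSpace ℂ F] [CompleteSpace F]
    [NormedAddCommGroup F'] [InnerProductSpace ℂ F'] [CompleteSpace F']
    (bF : HilbertBasis ℕ ℂ F) (bF' : HilbertBasis ℕ ℂ F')
    (T : (F →L[ℂ] F) → (F' →L[ℂ] F'))
    (hmap : ∀ ρ, IsDensityMatrix bF ρ → IsDensityMatrix bF' (T ρ))
    (hlin : ∀ a : ℝ, 0 ≤ a → a ≤ 1 → ∀ ρ₁ ρ₂ : F →L[ℂ] F,
      IsDensityMatrix bF ρ₁ → IsDensityMatrix bF ρ₂ →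
      T (a • ρ₁ + (1 - a) • ρ₂) = a • T ρ₁ + (1 - a) • T ρ₂)
    (f : ℝ → ℝ)
    (hf_cont : ContinuousOn f (Set.Ici 0))
    (hf_conv : ConvexOn ℝ (Set.Ici 0) f)
    (hf_reg : ∃ c₁ c₂ c₃ : ℝ, 0 ≤ c₁ ∧ 0 ≤ c₂ ∧ 0 ≤ c₃ ∧ ∃ δ > (0:ℝ),
      ∀ x : ℝ, 0 ≤ x → ∀ ε : ℝ, |ε| ≤ δ →
        |f ((1 - ε) * x) - f x| ≤ |ε| * (c₁ * |f x| + c₂ * |x| + c₃))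
    -- the positive-definite fixed point: `ρ∞`, `ρ̃∞`, diagonal with `q, q̃ > 0`
    (ρinf : F →L[ℂ] F) (ρtinf : F' →L[ℂ] F')
    (hρinf : IsDensityMatrix bF ρinf) (hρtinf : IsDensityMatrix bF' ρtinf)
    (q : ℕ → ℝ) (hq : ∀ i, 0 < q i) (hρinf_diag : ∀ i, ρinf (bF i) = (q i : ℂ) • bF i)
    (qt : ℕ → ℝ) (hqt : ∀ i, 0 < qt i)
    (hρtinf_diag : ∀ i, ρtinf (bF' i) = (qt i : ℂ) • bF' i)
    (hfix : T ρinf = ρtinf)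
    -- `ρ₀` commutes with `ρ∞` and `T ρ₀` with `ρ̃∞`: common eigenbases
    (ρ₀ : F →L[ℂ] F) (hρ₀ : IsDensityMatrix bF ρ₀)
    (p : ℕ → ℝ) (hρ₀_diag : ∀ i, ρ₀ (bF i) = (p i : ℂ) • bF i)
    (pt : ℕ → ℝ) (hTρ₀_diag : ∀ i, T ρ₀ (bF' i) = (pt i : ℂ) • bF' i)
    -- absolute convergence of `Tr[ρ∞ |f(ρ₀ ρ∞⁻¹)|]`
    (hfin : Summable (fun i => q i * |f (p i / q i)|)) :
    -(∑' i, qt i * f (pt i / qt i)) ≥ -(∑' i, q i * f (p i / q i)) :=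
  nondecreasing_functional_general bF bF' T hmap hlin f hf_conv ρinf ρtinf hρinf q hq hρinf_diag qt
    hqt hρtinf_diag hfix ρ₀ hρ₀ p hρ₀_diag pt hTρ₀_diag hfin
end

section
/- Fix 0 < x < 1 and 0 ≤ |R|² ≤ 1 with |R|²x² < 1. For nonnegative integers j, k define P(k|j) := K Σ_{s=0}^{min(j,k)} (j+k−s)! v^s / (s!(k−s)!(j−s)!), where K = (1−x) x^{2k} (1−|R|²)^{j+k} / (1−|R|²x²)^{j+k+1} and v = (|R|²−x²)(1−|R|²x²) / ((1−|R|²)² x²). Then for all j, k: P(k|j) e^{−β ω j} = P(j|k) e^{−β ω k}, where x = e^{−β ω / 2} (i.e., x² = e^{−β ω}). -/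
open scoped BigOperators

/-- The Panangaden–Wald single-mode conditional probability `P(k|j)` for a black
hole scattering channel, with `x = e^{-βω/2}` and reflection probability `r = |R|²`. -/
noncomputable def PW (x r : ℝ) (j k : ℕ) : ℝ :=
  ((1 - x) * x ^ (2 * k) * (1 - r) ^ (j + k) / (1 - r * x ^ 2) ^ (j + k + 1)) *
    ∑ s ∈ Finset.range (min j k + 1),
      (Nat.factorial (j + k - s) : ℝ) *
        ((r - x ^ 2) * (1 - r * x ^ 2) / ((1 - r) ^ 2 * x ^ 2)) ^ s /
        ((Nat.factorial s : ℝ) * (Nat.factorial (k - s)) * (Nat.factorial (j - s)))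

/-- Single-mode detailed balance: `P(k|j) e^{-βωj} = P(j|k) e^{-βωk}`. -/
theorem single_mode_detailed_balance
    (x r β ω : ℝ) (hx0 : 0 < x) (hx1 : x < 1)
    (hr0 : 0 ≤ r) (hr1 : r ≤ 1) (hrx : r * x ^ 2 < 1)
    (hxe : x = Real.exp (-(β * ω) / 2)) (j k : ℕ) :
    PW x r j k * Real.exp (-(β * ω) * j) = PW x r k j * Real.exp (-(β * ω) * k) := by
  have hexp : ∀ n : ℕ, Real.exp (-(β * ω) * n) = x ^ (2 * n) := by
    intro n
    rw [hxe, ← Real.exp_nat_mul]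
    congr 1
    push_cast
    ring
  rw [hexp j, hexp k]
  unfold PW
  rw [min_comm k j]
  have hs : (∑ s ∈ Finset.range (min j k + 1),
      (Nat.factorial (j + k - s) : ℝ) *
        ((r - x ^ 2) * (1 - r * x ^ 2) / ((1 - r) ^ 2 * x ^ 2)) ^ s /
        ((Nat.factorial s : ℝ) * (Nat.factorial (k - s)) * (Nat.factorial (j - s)))) =
      (∑ s ∈ Finset.range (min j k + 1),
      (Nat.factorial (k + j - s) : ℝ) *
        ((r - x ^ 2) * (1 - r * x ^ 2) / ((1 - r) ^ 2 * x ^ 2)) ^ s /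
        ((Nat.factorial s : ℝ) * (Nat.factorial (j - s)) * (Nat.factorial (k - s)))) := by
    refine Finset.sum_congr rfl fun s _ => ?_
    rw [Nat.add_comm j k]
    ring
  rw [hs, Nat.add_comm j k]
  ring
end

section
/- Let countably many modes be indexed by i, each with parameters 0 < x_i < 1, 0 ≤ |R_i|² ≤ 1, |R_i|² x_i² < 1, and energies ε_i := ω_i − Ω m_i with x_i = e^{−β ε_i / 2}. Define the product conditional probability P({k_i}|{j_i}) := Π_i P_i(k_i|j_i), where each single-mode P_i is given by the Panangaden–Wald formula P_i(k|j) = K_i Σ_{s=0}^{min(j,k)} (j+k−s)! v_i^s/(s!(k−s)!(j−s)!) with K_i = (1−x_i)x_i^{2k}(1−|R_i|²)^{j+k}/(1−|R_i|²x_i²)^{j+k+1} and v_i = (|R_i|²−x_i²)(1−|R_i|²x_i²)/((1−|R_i|²)²x_i²). Then for any two finitely supported sequences {j_i}, {k_i} of nonnegative integers: P({k_i}|{j_i}) exp(−β Σ_i j_i ε_i) = P({j_i}|{k_i}) exp(−β Σ_i k_i ε_i). -/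
open scoped BigOperators

lemma PW_symm (x r : ℝ) (j k : ℕ) : PW x r j k * x ^ (2*j) = PW x r k j * x ^ (2*k) := by
  unfold PW
  rw [min_comm k j, Nat.add_comm k j]
  rw [show (∑ s ∈ Finset.range (min j k + 1),
      (Nat.factorial (j + k - s) : ℝ) *
        ((r - x ^ 2) * (1 - r * x ^ 2) / ((1 - r) ^ 2 * x ^ 2)) ^ s /
        ((Nat.factorial s : ℝ) * (Nat.factorial (j - s)) * (Nat.factorial (k - s))))
      = (∑ s ∈ Finset.range (min j k + 1),
      (Nat.factorial (j + k - s) : ℝ) *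
        ((r - x ^ 2) * (1 - r * x ^ 2) / ((1 - r) ^ 2 * x ^ 2)) ^ s /
        ((Nat.factorial s : ℝ) * (Nat.factorial (k - s)) * (Nat.factorial (j - s))))
      from Finset.sum_congr rfl (fun s _ => by ring)]
  ring

lemma PW_zero_zero (x r : ℝ) : PW x r 0 0 = (1 - x) / (1 - r * x ^ 2) := by
  simp [PW]

lemma multipliable_of_le_one (h : ℕ → ℝ) (h0 : ∀ i, 0 ≤ h i) (h1 : ∀ i, h i ≤ 1) :
    Multipliable h := by
  refine ⟨⨅ s : Finset ℕ, ∏ i ∈ s, h i, tendsto_atTop_ciInf ?_ ?_⟩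
  · intro s t hst
    simp only
    rw [← Finset.prod_sdiff hst]
    calc (∏ i ∈ t \ s, h i) * ∏ i ∈ s, h i
        ≤ 1 * ∏ i ∈ s, h i := by
          refine mul_le_mul_of_nonneg_right ?_ (Finset.prod_nonneg fun i _ => h0 i)
          exact Finset.prod_le_one (fun i _ => h0 i) (fun i _ => h1 i)
      _ = ∏ i ∈ s, h i := one_mul _
  · refine ⟨0, ?_⟩
    rintro _ ⟨s, rfl⟩
    exact Finset.prod_nonneg fun i _ => h0 i

/-- Lemma 1 of the paper (multimode detailed balance): for countably many modes
with energies `ε_i = ω_i − Ω m_i`, `x_i = e^{−βε_i/2}`, and finitely supported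
occupation numbers `j, k`, the product conditional probability
`P({k_i}|{j_i}) = Π_i P_i(k_i|j_i)` satisfies
`P({k}|{j}) e^{−β Σ j_i ε_i} = P({j}|{k}) e^{−β Σ k_i ε_i}`. -/
theorem multimode_detailed_balance
    (β : ℝ) (x r ε : ℕ → ℝ)
    (hx0 : ∀ i, 0 < x i) (hx1 : ∀ i, x i < 1)
    (hr0 : ∀ i, 0 ≤ r i) (hr1 : ∀ i, r i ≤ 1)
    (hrx : ∀ i, r i * (x i) ^ 2 < 1)
    (hxe : ∀ i, x i = Real.exp (-(β * ε i) / 2))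
    (j k : ℕ →₀ ℕ) :
    (∏' i, PW (x i) (r i) (j i) (k i)) *
        Real.exp (-β * ∑ i ∈ j.support, (j i : ℝ) * ε i) =
      (∏' i, PW (x i) (r i) (k i) (j i)) *
        Real.exp (-β * ∑ i ∈ k.support, (k i : ℝ) * ε i) := by
  classical
  set S : Finset ℕ := j.support ∪ k.support with hS
  set h : ℕ → ℝ := fun i => (1 - x i) / (1 - r i * (x i) ^ 2) with hh
  have hne : ∀ i, h i ≠ 0 := fun i =>
    div_ne_zero (by linarith [hx1 i]) (by linarith [hrx i])
  have hh0 : ∀ i, 0 ≤ h i := fun i =>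
    div_nonneg (by linarith [hx1 i]) (by linarith [hrx i])
  have hh1 : ∀ i, h i ≤ 1 := by
    intro i
    rw [div_le_one (by linarith [hrx i])]
    have hxx : r i * (x i) ^ 2 ≤ x i := by
      nlinarith [hr0 i, hr1 i, hx0 i, hx1 i, sq_nonneg (x i)]
    linarith
  have hmulh : Multipliable h := multipliable_of_le_one h hh0 hh1
  -- multipliability of the two PW families
  have key : ∀ (a b : ℕ →₀ ℕ), Multipliable (fun i => PW (x i) (r i) (a i) (b i)) := by
    intro a b
    have : (fun i => PW (x i) (r i) (a i) (b i))
        = fun i => h i * (PW (x i) (r i) (a i) (b i) / h i) := by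
      funext i; rw [mul_div_cancel₀ _ (hne i)]
    rw [this]
    refine hmulh.mul (multipliable_of_ne_finset_one (s := a.support ∪ b.support) ?_)
    intro i hi
    simp only [Finset.mem_union, Finsupp.mem_support_iff, not_or, not_not] at hi
    rw [hi.1, hi.2, PW_zero_zero, hh, div_self (hne i)]
  -- exp factor as finite product
  have expeq : ∀ (a : ℕ →₀ ℕ), a.support ⊆ S →
      Real.exp (-β * ∑ i ∈ a.support, (a i : ℝ) * ε i)
        = ∏ i ∈ S, (x i) ^ (2 * a i) := by
    intro a hsub
    have h1 : ∑ i ∈ a.support, (a i : ℝ) * ε i = ∑ i ∈ S, (a i : ℝ) * ε i := by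
      refine Finset.sum_subset hsub ?_
      intro i _ hi
      simp [Finsupp.notMem_support_iff.mp hi]
    rw [h1, Finset.mul_sum, Real.exp_sum]
    refine Finset.prod_congr rfl ?_
    intro i _
    rw [hxe i, ← Real.exp_nat_mul]
    congr 1
    push_cast
    ring
  have hcS : ∀ i ∉ S, (x i) ^ (2 * j i) = 1 := by
    intro i hi
    have : j i = 0 := Finsupp.notMem_support_iff.mp fun hmem =>
      hi (Finset.mem_union_left _ hmem)
    simp [this]
  have hdS : ∀ i ∉ S, (x i) ^ (2 * k i) = 1 := by
    intro i hi
    have : k i = 0 := Finsupp.notMem_support_iff.mp fun hmem =>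
      hi (Finset.mem_union_right _ hmem)
    simp [this]
  have hc : HasProd (fun i => (x i) ^ (2 * j i)) (∏ i ∈ S, (x i) ^ (2 * j i)) :=
    hasProd_prod_of_ne_finset_one hcS
  have hd : HasProd (fun i => (x i) ^ (2 * k i)) (∏ i ∈ S, (x i) ^ (2 * k i)) :=
    hasProd_prod_of_ne_finset_one hdS
  rw [expeq j (Finset.subset_union_left), expeq k (Finset.subset_union_right)]
  rw [← hc.tprod_eq, ← hd.tprod_eq]
  rw [← Multipliable.tprod_mul (key j k) hc.multipliable, ← Multipliable.tprod_mul (key k j) hd.multipliable]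
  exact tprod_congr fun i => PW_symm (x i) (r i) (j i) (k i)
end
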